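/- arXiv:hep-th/9801199 — 3 statements merged into one kernel-verified Lean document; each statement's English description precedes it below -/
import Mathlib

section
/- Fix k ∈ ℕ, k ≥ 1, and a node x of a locally finite graph G. Let G' be obtained from G by inserting bonds between arbitrarily many pairs of nodes (y,z) with d_G(y,z) ≤ k. Then the lower and upper internal scaling dimensions at x are unchanged: liminf_n ln|U'_n(x)|/ln(n) = liminf_n ln|U_n(x)|/ln(n), and likewise for limsup. -/
/-!
Adding edges of `G`-length at most `k` shrinks distances by at most the factor `k`, so
`U_n(x) ⊆ U'_n(x) ⊆ U_{kn}(x)`. Writing `D_n = log |U_n| / log n` and `D'_n` likewise, this gives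
`D_n ≤ D'_n ≤ D_{kn} · log (kn) / log n` and `D'_{⌊n/k⌋} · log ⌊n/k⌋ / log n ≤ D_n`. Both
correction factors tend to `1`, and the reindexings `n ↦ kn`, `n ↦ ⌊n/k⌋` tend to infinity, so
neither the liminf nor the limsup can move.
-/

open Filter Topology

/-- The metric ball of radius `n` around `x` in the graph `G`. -/
noncomputable def gball {V : Type*} (G : SimpleGraph V) (x : V) (n : ℕ) : Set V :=
  {z | G.edist x z ≤ n}

/-- The boundary sphere of radius `n` around `x` in the graph `G`. -/
noncomputable def gsphere {V : Type*} (G : SimpleGraph V) (x : V) : ℕ → Set V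
  | 0 => {x}
  | n + 1 => gball G x (n + 1) \ gball G x n

-- Needs no boundedness: if `s` is empty or unbounded below, so is `t`, and both sides are junk `0`.
theorem Real.sInf_eq_of_subset_of_forall_add_mem {s t : Set ℝ} (hts : t ⊆ s)
    (hst : ∀ c ∈ s, ∀ ε > 0, c + ε ∈ t) : sInf t = sInf s := by
  rcases s.eq_empty_or_nonempty with rfl | ⟨c, hc⟩
  · rw [Set.subset_empty_iff.1 hts]
  by_cases hs : BddBelow s
  · refine le_antisymm (le_of_forall_pos_le_add fun ε hε => ?_)
      (csInf_le_csInf hs ⟨_, hst c hc 1 one_pos⟩ hts)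
    have : sInf t - ε ≤ sInf s := le_csInf ⟨c, hc⟩ fun d hd =>
      sub_le_iff_le_add.2 (csInf_le (hs.mono hts) (hst d hd ε hε))
    linarith
  · have ht : ¬BddBelow t := fun ⟨L, hL⟩ =>
      hs ⟨L - 1, fun d hd => by linarith [hL (hst d hd 1 one_pos)]⟩
    rw [Real.sInf_of_not_bddBelow hs, Real.sInf_of_not_bddBelow ht]

theorem Real.sSup_eq_of_subset_of_forall_sub_mem {s t : Set ℝ} (hst : s ⊆ t)
    (hts : ∀ c ∈ t, ∀ ε > 0, c - ε ∈ s) : sSup s = sSup t := by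
  have h := Real.sInf_eq_of_subset_of_forall_add_mem (Set.neg_subset_neg.2 hst)
    fun c hc ε hε => by simpa [neg_add_eq_sub] using hts (-c) hc ε hε
  rw [← neg_neg s, ← neg_neg t, Real.sSup_neg, Real.sSup_neg, h]

section ComparisonWithRescaling

variable {α : Type*} {l : Filter α} {f g : α → ℝ} {φ : α → α} {s : α → ℝ}

theorem limsup_eq_of_le_of_le_comp_mul (hφ : Tendsto φ l l) (hs : Tendsto s l (𝓝 1))
    (hfg : f ≤ᶠ[l] g) (hg : ∀ᶠ x in l, g x ≤ f (φ x) * s x) : limsup g l = limsup f l := by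
  rw [limsup_eq, limsup_eq]
  refine Real.sInf_eq_of_subset_of_forall_add_mem (fun c hc => hfg.trans hc) fun c hc ε hε => ?_
  have hcs : ∀ᶠ x in l, c * s x < c + ε :=
    (by simpa using hs.const_mul c : Tendsto (fun x => c * s x) l (𝓝 c)).eventually_lt_const
      (by linarith)
  filter_upwards [hg, hφ.eventually hc, hcs, hs.eventually_const_lt one_pos] with x hgx hfx hcsx hsx
  calc g x ≤ f (φ x) * s x := hgx
    _ ≤ c * s x := mul_le_mul_of_nonneg_right hfx hsx.le
    _ ≤ c + ε := hcsx.le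

theorem liminf_eq_of_le_of_comp_mul_le (hφ : Tendsto φ l l) (hs : Tendsto s l (𝓝 1))
    (hfg : f ≤ᶠ[l] g) (hf : ∀ᶠ x in l, g (φ x) * s x ≤ f x) : liminf f l = liminf g l := by
  rw [liminf_eq, liminf_eq]
  refine Real.sSup_eq_of_subset_of_forall_sub_mem
    (fun c hc => (hc.and hfg).mono fun _ h => h.1.trans h.2) fun c hc ε hε => ?_
  have hcs : ∀ᶠ x in l, c - ε < c * s x :=
    (by simpa using hs.const_mul c : Tendsto (fun x => c * s x) l (𝓝 c)).eventually_const_lt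
      (by linarith)
  filter_upwards [hf, hφ.eventually hc, hcs, hs.eventually_const_lt one_pos] with x hfx hgx hcsx hsx
  calc c - ε ≤ c * s x := hcsx.le
    _ ≤ g (φ x) * s x := mul_le_mul_of_nonneg_right hgx hsx.le
    _ ≤ f x := hfx

end ComparisonWithRescaling

theorem tendsto_log_mul_div_log {c : ℝ} (hc : 0 < c) :
    Tendsto (fun n : ℕ => Real.log (c * n) / Real.log n) atTop (𝓝 1) := by
  have hlog : Tendsto (fun n : ℕ => Real.log n) atTop atTop :=
    Real.tendsto_log_atTop.comp tendsto_natCast_atTop_atTop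
  have h := (tendsto_const_nhds (x := Real.log c)).div_atTop hlog |>.add_const 1
  rw [zero_add] at h
  refine h.congr' ?_
  filter_upwards [eventually_gt_atTop 1] with n hn
  have hn' : (1 : ℝ) < n := by exact_mod_cast hn
  rw [Real.log_mul hc.ne' (by positivity), add_div, div_self (Real.log_pos hn').ne']

theorem tendsto_log_comp_div_log {φ : ℕ → ℕ} {c₁ c₂ : ℝ} (hc₁ : 0 < c₁)
    (hφ : ∀ᶠ n in atTop, c₁ * n ≤ φ n ∧ (φ n : ℝ) ≤ c₂ * n) :
    Tendsto (fun n => Real.log (φ n) / Real.log n) atTop (𝓝 1) := by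
  refine tendsto_of_tendsto_of_tendsto_of_le_of_le' (tendsto_log_mul_div_log hc₁)
    (tendsto_log_mul_div_log (c := c₂) ?_) ?_ ?_
  · obtain ⟨n, ⟨h₁, h₂⟩, hn⟩ := (hφ.and (eventually_gt_atTop 0)).exists
    have hn' : (0 : ℝ) < n := by exact_mod_cast hn
    nlinarith
  all_goals
    filter_upwards [hφ, eventually_gt_atTop 0] with n ⟨h₁, h₂⟩ hn
    have hc₁n : 0 < c₁ * n := mul_pos hc₁ (by exact_mod_cast hn)
    refine div_le_div_of_nonneg_right ?_ (Real.log_natCast_nonneg n)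
  · exact Real.log_le_log hc₁n h₁
  · exact Real.log_le_log (hc₁n.trans_le h₁) h₂

section DivLog

variable {a b : ℕ → ℝ} {k : ℕ}

theorem limsup_div_log_eq_of_le_of_le_mul (hk : 0 < k) (hab : ∀ n, a n ≤ b n)
    (hba : ∀ n, b n ≤ a (k * n)) :
    limsup (fun n : ℕ => b n / Real.log n) atTop =
      limsup (fun n : ℕ => a n / Real.log n) atTop := by
  have hk' : (0 : ℝ) < k := by exact_mod_cast hk
  refine limsup_eq_of_le_of_le_comp_mul (φ := (k * ·))
    (s := fun n => Real.log (k * n : ℕ) / Real.log n) (tendsto_id.const_mul_atTop' hk)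
    (tendsto_log_comp_div_log hk' (.of_forall fun n => by push_cast; exact ⟨le_rfl, le_rfl⟩))
    (.of_forall fun n => div_le_div_of_nonneg_right (hab n) (Real.log_natCast_nonneg n)) ?_
  filter_upwards [eventually_gt_atTop 1] with n hn
  have hkn : Real.log (k * n : ℕ) ≠ 0 :=
    (Real.log_pos (by exact_mod_cast (by nlinarith : 1 < k * n))).ne'
  calc b n / Real.log n ≤ a (k * n) / Real.log n :=
        div_le_div_of_nonneg_right (hba n) (Real.log_natCast_nonneg n)
    _ = a (k * n) / Real.log (k * n : ℕ) * (Real.log (k * n : ℕ) / Real.log n) := by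
        field_simp

theorem liminf_div_log_eq_of_le_of_le_mul (hk : 0 < k) (ha : Monotone a)
    (hab : ∀ n, a n ≤ b n) (hba : ∀ n, b n ≤ a (k * n)) :
    liminf (fun n : ℕ => b n / Real.log n) atTop =
      liminf (fun n : ℕ => a n / Real.log n) atTop := by
  have hk' : (0 : ℝ) < k := by exact_mod_cast hk
  have hφ : ∀ᶠ n : ℕ in atTop,
      1 / (2 * k) * (n : ℝ) ≤ (n / k : ℕ) ∧ ((n / k : ℕ) : ℝ) ≤ 1 / k * n := by
    filter_upwards [eventually_ge_atTop k] with n hn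
    refine ⟨?_, by simpa [div_eq_inv_mul] using Nat.cast_div_le (α := ℝ) (m := n) (n := k)⟩
    have hq : k ≤ k * (n / k) := Nat.le_mul_of_pos_right k (Nat.div_pos hn hk)
    have : n ≤ 2 * (k * (n / k)) := by
      have := Nat.div_add_mod n k
      have := Nat.mod_lt n hk
      omega
    have : (n : ℝ) ≤ 2 * (k * (n / k : ℕ)) := by exact_mod_cast this
    rw [div_mul_eq_mul_div, one_mul, div_le_iff₀ (by positivity)]
    linarith
  refine (liminf_eq_of_le_of_comp_mul_le (φ := (· / k))
    (s := fun n => Real.log (n / k : ℕ) / Real.log n) (Nat.tendsto_div_const_atTop hk.ne')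
    (tendsto_log_comp_div_log (by positivity) hφ)
    (.of_forall fun n => div_le_div_of_nonneg_right (hab n) (Real.log_natCast_nonneg n)) ?_).symm
  filter_upwards [eventually_ge_atTop (2 * k)] with n hn
  have hnk : Real.log (n / k : ℕ) ≠ 0 :=
    (Real.log_pos (by exact_mod_cast (Nat.le_div_iff_mul_le hk).2 (by linarith))).ne'
  calc b (n / k) / Real.log (n / k : ℕ) * (Real.log (n / k : ℕ) / Real.log n)
        = b (n / k) / Real.log n := by field_simp
    _ ≤ a (k * (n / k)) / Real.log n :=
        div_le_div_of_nonneg_right (hba _) (Real.log_natCast_nonneg n)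
    _ ≤ a n / Real.log n :=
        div_le_div_of_nonneg_right (ha (Nat.mul_div_le n k)) (Real.log_natCast_nonneg n)

end DivLog

theorem Set.log_ncard_le_log_ncard {α : Type*} {s t : Set α} (hst : s ⊆ t) (ht : t.Finite)
    (hs : s.Nonempty) : Real.log s.ncard ≤ Real.log t.ncard :=
  Real.log_le_log (by exact_mod_cast (Set.ncard_pos (ht.subset hst)).2 hs)
    (by exact_mod_cast Set.ncard_le_ncard hst ht)

theorem SimpleGraph.edist_le_mul_length {V : Type*} {G G' : SimpleGraph V} {k : ℕ}
    (hnew : ∀ y z : V, G'.Adj y z → G.edist y z ≤ k) {y z : V} (p : G'.Walk y z) :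
    G.edist y z ≤ k * p.length := by
  induction p with
  | nil => simp
  | cons h p ih =>
    calc G.edist _ _ ≤ G.edist _ _ + G.edist _ _ := G.edist_triangle
      _ ≤ k + k * p.length := add_le_add (hnew _ _ h) ih
      _ = k * (p.cons h).length := by push_cast [Walk.length_cons]; ring

section GraphBall

variable {V : Type*} {G G' : SimpleGraph V} {k : ℕ}

theorem mem_gball_self (G : SimpleGraph V) (x : V) (n : ℕ) : x ∈ gball G x n := by
  simp [gball]

theorem gball_mono (G : SimpleGraph V) (x : V) : Monotone (gball G x) :=
  fun m n hmn z (hz : G.edist x z ≤ m) => show G.edist x z ≤ n from hz.trans (Nat.cast_le.2 hmn)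

theorem gball_subset_gball_of_le (h : G ≤ G') (x : V) (n : ℕ) : gball G x n ⊆ gball G' x n :=
  fun _ hz => (SimpleGraph.edist_anti h).trans hz

theorem gball_subset_gball_mul (hnew : ∀ y z : V, G'.Adj y z → G.edist y z ≤ k) (x : V)
    (n : ℕ) : gball G' x n ⊆ gball G x (k * n) := by
  intro z hz
  obtain ⟨p, hp⟩ :=
    SimpleGraph.exists_walk_of_edist_ne_top (ne_top_of_le_ne_top (ENat.natCast_ne_top n) hz)
  calc G.edist x z ≤ k * p.length := SimpleGraph.edist_le_mul_length hnew p
    _ ≤ k * n := by gcongr; exact_mod_cast hp.trans_le hz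
    _ = (k * n : ℕ) := by push_cast; rfl

theorem gball_succ_subset (G : SimpleGraph V) (x : V) (n : ℕ) :
    gball G x (n + 1) ⊆ gball G x n ∪ ⋃ y ∈ gball G x n, G.neighborSet y := by
  intro z (hz : G.edist x z ≤ (n + 1 : ℕ))
  rw [SimpleGraph.edist_comm] at hz
  obtain ⟨p, hp⟩ :=
    SimpleGraph.exists_walk_of_edist_ne_top (ne_top_of_le_ne_top (ENat.natCast_ne_top _) hz)
  cases p with
  | nil => exact Or.inl (mem_gball_self G x n)
  | @cons _ y _ h q =>
    refine Or.inr (Set.mem_biUnion (x := y) ?_ h.symm)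
    have hq : q.length ≤ n := by
      have : (q.length + 1 : ℕ∞) ≤ n + 1 := by simpa [← hp] using hz
      exact_mod_cast (ENat.add_le_add_iff_right ENat.one_ne_top).1 this
    calc G.edist x y = G.edist y x := SimpleGraph.edist_comm
      _ ≤ q.length := SimpleGraph.edist_le q
      _ ≤ n := by exact_mod_cast hq

theorem gball_finite (hlf : G.LocallyFinite) (x : V) (n : ℕ) : (gball G x n).Finite := by
  induction n with
  | zero => exact (Set.finite_singleton x).subset fun z hz => by simpa [gball] using hz
  | succ n ih =>
    exact (ih.union (ih.biUnion fun y _ => (G.neighborSet y).toFinite)).subset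
      (gball_succ_subset G x n)

end GraphBall

theorem scaling_dimension_stable_under_local_edge_insertion {V : Type*}
    (G G' : SimpleGraph V) (hlf : G.LocallyFinite) (k : ℕ) (hk : 1 ≤ k)
    (hle : G ≤ G') (hnew : ∀ y z : V, G'.Adj y z → G.edist y z ≤ k) (x : V) :
    Filter.liminf (fun n : ℕ => Real.log (gball G' x n).ncard / Real.log n) Filter.atTop =
      Filter.liminf (fun n : ℕ => Real.log (gball G x n).ncard / Real.log n) Filter.atTop ∧
    Filter.limsup (fun n : ℕ => Real.log (gball G' x n).ncard / Real.log n) Filter.atTop =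
      Filter.limsup (fun n : ℕ => Real.log (gball G x n).ncard / Real.log n) Filter.atTop := by
  have hfin : ∀ n, (gball G x n).Finite := gball_finite hlf x
  have hfin' : ∀ n, (gball G' x n).Finite := fun n =>
    (hfin (k * n)).subset (gball_subset_gball_mul hnew x n)
  have hmono : Monotone fun n => Real.log (gball G x n).ncard := fun m n hmn =>
    Set.log_ncard_le_log_ncard (gball_mono G x hmn) (hfin n) ⟨x, mem_gball_self G x m⟩
  have hGG' : ∀ n, Real.log (gball G x n).ncard ≤ Real.log (gball G' x n).ncard := fun n =>
    Set.log_ncard_le_log_ncard (gball_subset_gball_of_le hle x n) (hfin' n)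
      ⟨x, mem_gball_self G x n⟩
  have hG'G : ∀ n, Real.log (gball G' x n).ncard ≤ Real.log (gball G x (k * n)).ncard :=
    fun n => Set.log_ncard_le_log_ncard (gball_subset_gball_mul hnew x n) (hfin (k * n))
      ⟨x, mem_gball_self G' x n⟩
  exact ⟨liminf_div_log_eq_of_le_of_le_mul hk hmono hGG' hG'G,
    limsup_div_log_eq_of_le_of_le_mul hk hGG' hG'G⟩
end

section
/- Let a_n be a nondecreasing sequence of positive reals and suppose lim_{n→∞} ln(a_n − a_{n−1})/ln(n) = α exists with α > 0 (where a_n − a_{n−1} > 0). Then lim_{n→∞} ln(a_n)/ln(n) = α + 1. -/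
open Filter Topology

theorem cumulative_scaling (a : ℕ → ℝ) (hmono : Monotone a) (hpos : ∀ n, 0 < a n)
    (hdiff : ∀ n, 1 ≤ n → 0 < a n - a (n - 1)) (α : ℝ) (hα : 0 < α)
    (h : Filter.Tendsto (fun n : ℕ => Real.log (a n - a (n - 1)) / Real.log n)
      Filter.atTop (nhds α)) :
    Filter.Tendsto (fun n : ℕ => Real.log (a n) / Real.log n)
      Filter.atTop (nhds (α + 1)) := by
  have hlog : Tendsto (fun n : ℕ => Real.log n) atTop atTop :=
    Real.tendsto_log_atTop.comp tendsto_natCast_atTop_atTop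
  rw [Metric.tendsto_nhds] at h ⊢
  intro ε hε
  have hδ0 : (0:ℝ) < min (ε/2) (α/2) := lt_min (by linarith) (by linarith)
  set δ := min (ε/2) (α/2) with hδdef
  have hδε : δ ≤ ε/2 := min_le_left _ _
  have hδα : δ < α := lt_of_le_of_lt (min_le_right _ _) (by linarith)
  obtain ⟨N0, hN0⟩ := eventually_atTop.1 (h δ hδ0)
  set N1 := max N0 2 with hN1def
  have hN1two : 2 ≤ N1 := le_max_right _ _
  -- pointwise bounds on increments
  have hb : ∀ n : ℕ, N1 ≤ n →
      (n:ℝ)^(α-δ) ≤ a n - a (n-1) ∧ a n - a (n-1) ≤ (n:ℝ)^(α+δ) := by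
    intro n hn
    have hn2 : 2 ≤ n := le_trans hN1two hn
    have hn1 : (1:ℝ) < (n:ℝ) := by exact_mod_cast hn2.trans_lt' one_lt_two
    have hnpos : (0:ℝ) < (n:ℝ) := lt_trans one_pos hn1
    have hlogn : 0 < Real.log n := Real.log_pos hn1
    have hbn : 0 < a n - a (n-1) := hdiff n (le_trans one_le_two hn2)
    have hd := hN0 n (le_trans (le_max_left _ _) hn)
    rw [Real.dist_eq, abs_sub_lt_iff] at hd
    have hq1 : Real.log (a n - a (n-1)) / Real.log n < α + δ := by linarith [hd.1]
    have hq2 : α - δ < Real.log (a n - a (n-1)) / Real.log n := by linarith [hd.2]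
    have heq : (Real.log (a n - a (n-1)) / Real.log n) * Real.log n
        = Real.log (a n - a (n-1)) := by field_simp
    constructor
    · rw [← Real.log_le_log_iff (Real.rpow_pos_of_pos hnpos _) hbn, Real.log_rpow hnpos]
      nlinarith
    · rw [← Real.log_le_log_iff hbn (Real.rpow_pos_of_pos hnpos _), Real.log_rpow hnpos]
      nlinarith
  -- upper bound
  have upper : ∀ᶠ n : ℕ in atTop, Real.log (a n) / Real.log n < α + 1 + ε := by
    have hev1 : ∀ᶠ n : ℕ in atTop, a N1 ≤ (n:ℝ)^(α+δ+1) :=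
      ((tendsto_rpow_atTop (by linarith)).comp
        tendsto_natCast_atTop_atTop).eventually_ge_atTop _
    have hev2 : ∀ᶠ n : ℕ in atTop, Real.log 2 < (ε/2) * Real.log n :=
      (hlog.const_mul_atTop (by linarith : (0:ℝ) < ε/2)).eventually_gt_atTop _
    filter_upwards [hev1, hev2, eventually_ge_atTop N1] with n h1 h2 hnN1
    have hn2 : 2 ≤ n := le_trans hN1two hnN1
    have hn1 : (1:ℝ) < (n:ℝ) := by exact_mod_cast hn2.trans_lt' one_lt_two
    have hnpos : (0:ℝ) < (n:ℝ) := lt_trans one_pos hn1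
    have hlogn : 0 < Real.log n := Real.log_pos hn1
    have hsum : a n - a N1 = ∑ k ∈ Finset.Ico N1 n, (a (k+1) - a k) := by
      rw [Finset.sum_Ico_eq_sub _ hnN1, Finset.sum_range_sub, Finset.sum_range_sub]
      ring
    have hsum_le : ∑ k ∈ Finset.Ico N1 n, (a (k+1) - a k)
        ≤ ((n - N1 : ℕ) : ℝ) * (n:ℝ)^(α+δ) := by
      have := Finset.sum_le_card_nsmul (Finset.Ico N1 n) (fun k => a (k+1) - a k)
        ((n:ℝ)^(α+δ)) ?_
      · simpa [Nat.card_Ico, nsmul_eq_mul] using this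
      · intro k hk
        rw [Finset.mem_Ico] at hk
        have hkN1 : N1 ≤ k + 1 := le_trans hk.1 (Nat.le_succ _)
        have := (hb (k+1) hkN1).2
        simp only [Nat.add_sub_cancel] at this
        refine this.trans (Real.rpow_le_rpow (by positivity) ?_ (by linarith))
        exact_mod_cast hk.2
    have hcast : ((n - N1 : ℕ) : ℝ) ≤ (n:ℝ) := by exact_mod_cast Nat.sub_le n N1
    have hrpow_pos : (0:ℝ) < (n:ℝ)^(α+δ) := Real.rpow_pos_of_pos hnpos _
    have hsplit : (n:ℝ)^(α+δ+1) = (n:ℝ)^(α+δ) * n := by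
      rw [Real.rpow_add hnpos, Real.rpow_one]
    have hub : a n ≤ 2 * (n:ℝ)^(α+δ+1) := by nlinarith
    have hlogub : Real.log (a n) ≤ Real.log 2 + (α+δ+1) * Real.log n := by
      have := (Real.log_le_log_iff (hpos n) (by positivity)).2 hub
      rwa [Real.log_mul (by norm_num) (by positivity), Real.log_rpow hnpos] at this
    rw [div_lt_iff₀ hlogn]
    nlinarith
  -- lower bound
  have lower : ∀ᶠ n : ℕ in atTop, α + 1 - ε < Real.log (a n) / Real.log n := by
    have hev2 : ∀ᶠ n : ℕ in atTop, (α+1) * Real.log 4 < (ε/2) * Real.log n :=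
      (hlog.const_mul_atTop (by linarith : (0:ℝ) < ε/2)).eventually_gt_atTop _
    filter_upwards [hev2, eventually_ge_atTop (2 * N1 + 2)] with n h2 hn
    set m := n / 2 with hmdef
    have hmN1 : N1 ≤ m := by omega
    have hm2 : 2 ≤ m := le_trans hN1two hmN1
    have hmn : m ≤ n := Nat.div_le_self n 2
    have hnm : m ≤ n - m := by omega
    have hn2 : 2 ≤ n := by omega
    have hn1 : (1:ℝ) < (n:ℝ) := by exact_mod_cast hn2.trans_lt' one_lt_two
    have hnpos : (0:ℝ) < (n:ℝ) := lt_trans one_pos hn1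
    have hlogn : 0 < Real.log n := Real.log_pos hn1
    have hmpos : (0:ℝ) < (m:ℝ) := by exact_mod_cast Nat.lt_of_lt_of_le Nat.zero_lt_two hm2
    have hm4 : (n:ℝ)/4 ≤ (m:ℝ) := by
      have : n ≤ 2 * m + 1 := by omega
      have : (n:ℝ) ≤ 2 * (m:ℝ) + 1 := by exact_mod_cast this
      have h1m : (1:ℝ) ≤ (m:ℝ) := by exact_mod_cast Nat.one_le_iff_ne_zero.2 (by omega)
      linarith
    have hsum : a n - a m = ∑ k ∈ Finset.Ico m n, (a (k+1) - a k) := by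
      rw [Finset.sum_Ico_eq_sub _ hmn, Finset.sum_range_sub, Finset.sum_range_sub]
      ring
    have hsum_ge : ((n - m : ℕ) : ℝ) * (m:ℝ)^(α-δ)
        ≤ ∑ k ∈ Finset.Ico m n, (a (k+1) - a k) := by
      have := Finset.card_nsmul_le_sum (Finset.Ico m n) (fun k => a (k+1) - a k)
        ((m:ℝ)^(α-δ)) ?_
      · simpa [Nat.card_Ico, nsmul_eq_mul] using this
      · intro k hk
        rw [Finset.mem_Ico] at hk
        have hkN1 : N1 ≤ k + 1 := le_trans hmN1 (le_trans hk.1 (Nat.le_succ _))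
        have := (hb (k+1) hkN1).1
        simp only [Nat.add_sub_cancel] at this
        refine le_trans (Real.rpow_le_rpow (le_of_lt hmpos) ?_ (by linarith)) this
        exact_mod_cast le_trans hk.1 (Nat.le_succ _)
    have hcast : (m:ℝ) ≤ ((n - m : ℕ) : ℝ) := by exact_mod_cast hnm
    have hrpow_pos : (0:ℝ) < (m:ℝ)^(α-δ) := Real.rpow_pos_of_pos hmpos _
    have hsplit : (m:ℝ)^(α-δ+1) = (m:ℝ)^(α-δ) * m := by
      rw [Real.rpow_add hmpos, Real.rpow_one]
    have hlb1 : (m:ℝ)^(α-δ+1) ≤ a n := by nlinarith [hpos m]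
    have hlb2 : ((n:ℝ)/4)^(α-δ+1) ≤ (m:ℝ)^(α-δ+1) :=
      Real.rpow_le_rpow (by positivity) hm4 (by linarith)
    have hloglb : (α-δ+1) * Real.log n - (α-δ+1) * Real.log 4 ≤ Real.log (a n) := by
      have hq : (0:ℝ) < ((n:ℝ)/4)^(α-δ+1) := Real.rpow_pos_of_pos (by positivity) _
      have := (Real.log_le_log_iff hq (hpos n)).2 (le_trans hlb2 hlb1)
      rwa [Real.log_rpow (by positivity), Real.log_div (by positivity) (by norm_num),
        mul_sub] at this
    have hlog4 : (0:ℝ) < Real.log 4 := Real.log_pos (by norm_num)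
    rw [lt_div_iff₀ hlogn]
    nlinarith
  filter_upwards [upper, lower] with n h1 h2
  rw [Real.dist_eq, abs_sub_lt_iff]
  constructor <;> linarith
end

section
/- For each real D with 1 ≤ D ≤ 2, the 'conical graph' whose boundary sphere sizes satisfy |∂U_{2k−1}(x_0)| = ⌊(2k−1)^{D−1}⌋ (with ball sizes interpolating monotonically) has internal scaling dimension D at x_0. More abstractly: if x_0 is a node of a locally finite graph such that |∂U_n(x_0)| = ⌊n^{D−1}⌋ for all odd n and the sphere sizes at even n are bounded between those at adjacent odd values, then D_S(x_0) = D. -/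
open Filter Topology

lemma gball_zero {V : Type*} (G : SimpleGraph V) (x : V) : gball G x 0 = {x} := by
  ext z
  simp only [gball, Set.mem_setOf_eq, Nat.cast_zero, nonpos_iff_eq_zero,
    SimpleGraph.edist_eq_zero_iff, Set.mem_singleton_iff]
  exact eq_comm

lemma gball_mono_s9 {V : Type*} (G : SimpleGraph V) (x : V) {m n : ℕ} (h : m ≤ n) :
    gball G x m ⊆ gball G x n := by
  intro z hz
  have h' : (m : ℕ∞) ≤ (n : ℕ∞) := by exact_mod_cast h
  exact le_trans hz h'

lemma gball_succ {V : Type*} (G : SimpleGraph V) (x : V) (n : ℕ) :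
    gball G x (n + 1) = gball G x n ∪ gsphere G x (n + 1) := by
  rw [gsphere, Set.union_diff_cancel (gball_mono_s9 G x (Nat.le_succ n))]

lemma gsphere_disjoint {V : Type*} (G : SimpleGraph V) (x : V) (n : ℕ) :
    Disjoint (gball G x n) (gsphere G x (n + 1)) := by
  rw [gsphere]
  exact Set.disjoint_sdiff_right

/-- floor is at least half for x ≥ 1 -/
lemma half_le_floor (x : ℝ) (h : 1 ≤ x) : x / 2 ≤ (⌊x⌋ : ℝ) := by
  rcases le_or_gt 2 x with h2 | h2
  · have := Int.sub_one_lt_floor x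
    linarith
  · have h1 : (1 : ℤ) ≤ ⌊x⌋ := Int.le_floor.mpr (by exact_mod_cast h)
    have : (1 : ℝ) ≤ (⌊x⌋ : ℝ) := by exact_mod_cast h1
    linarith

theorem conical_graph_dimension {V : Type*} (G : SimpleGraph V)
    (hlf : G.LocallyFinite) (x0 : V) (D : ℝ) (hD1 : 1 ≤ D) (hD2 : D ≤ 2)
    (hodd : ∀ n : ℕ, Odd n → ((gsphere G x0 n).ncard : ℝ) = ⌊(n : ℝ) ^ (D - 1)⌋)
    (heven : ∀ k : ℕ, 1 ≤ k →
      (gsphere G x0 (2 * k - 1)).ncard ≤ (gsphere G x0 (2 * k)).ncard ∧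
      (gsphere G x0 (2 * k)).ncard ≤ (gsphere G x0 (2 * k + 1)).ncard) :
    Filter.Tendsto (fun n : ℕ => Real.log (gball G x0 n).ncard / Real.log n)
      Filter.atTop (nhds D) := by
  have hD1' : (0:ℝ) ≤ D - 1 := by linarith
  set s : ℕ → ℕ := fun n => (gsphere G x0 n).ncard with hs_def
  set b : ℕ → ℕ := fun n => (gball G x0 n).ncard with hb_def
  -- 1 ≤ n^{D-1} for n ≥ 1
  have hrpow1 : ∀ n : ℕ, 1 ≤ n → (1:ℝ) ≤ (n:ℝ) ^ (D-1) :=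
    fun n hn => Real.one_le_rpow (by exact_mod_cast hn) hD1'
  -- odd spheres are nonempty and finite
  have hodd1 : ∀ n : ℕ, Odd n → 1 ≤ s n ∧ (gsphere G x0 n).Finite := by
    intro n hn
    have hn1 : 1 ≤ n := hn.pos
    have h1 : (1:ℝ) ≤ (s n : ℝ) := by
      rw [hodd n hn]
      exact_mod_cast Int.le_floor.mpr (by exact_mod_cast hrpow1 n hn1)
    have h1' : 1 ≤ s n := by exact_mod_cast h1
    refine ⟨h1', Set.finite_of_ncard_ne_zero ?_⟩
    show s n ≠ 0
    omega
  -- all spheres with n ≥ 1 are nonempty and finite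
  have hpos : ∀ n : ℕ, 1 ≤ n → 1 ≤ s n ∧ (gsphere G x0 n).Finite := by
    intro n hn
    rcases Nat.even_or_odd n with he | ho
    · obtain ⟨k, hk⟩ := he
      have hk1 : 1 ≤ k := by omega
      have hodd_prev : Odd (2 * k - 1) := ⟨k - 1, by omega⟩
      have h1 := (hodd1 _ hodd_prev).1
      have hle : s (2*k-1) ≤ s (2*k) := (heven k hk1).1
      have hn2k : n = 2 * k := by omega
      have h1' : 1 ≤ s n := by rw [hn2k]; omega
      refine ⟨h1', Set.finite_of_ncard_ne_zero ?_⟩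
      show s n ≠ 0
      omega
    · exact hodd1 n ho
  -- sphere 0
  have hs0 : s 0 = 1 := by
    simp only [hs_def, gsphere, Set.ncard_singleton]
  -- ball finiteness and decomposition
  have hball : ∀ n : ℕ, (gball G x0 n).Finite ∧ b n = ∑ m ∈ Finset.range (n+1), s m := by
    intro n
    induction n with
    | zero =>
      constructor
      · rw [gball_zero]; exact Set.finite_singleton _
      · have hb0 : b 0 = 1 := by simp [hb_def, gball_zero]
        rw [hb0, Finset.sum_range_one, hs0]
    | succ n ih =>
      have hfin : (gball G x0 (n+1)).Finite := by
        rw [gball_succ]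
        exact ih.1.union (hpos (n+1) (by omega)).2
      constructor
      · exact hfin
      · have : b (n+1) = b n + s (n+1) := by
          simp only [hb_def, hs_def]
          rw [gball_succ]
          exact Set.ncard_union_eq (gsphere_disjoint G x0 n) ih.1 (hpos (n+1) (by omega)).2
        rw [this, ih.2]
        exact (Finset.sum_range_succ s (n+1)).symm
  -- upper bound for spheres
  have hsub : ∀ m : ℕ, (s m : ℝ) ≤ ((m:ℝ)+1) ^ (D-1) := by
    intro m
    rcases Nat.eq_zero_or_pos m with h0 | h1
    · rw [h0, hs0]
      simpa using hrpow1 1 le_rfl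
    rcases Nat.even_or_odd m with he | ho
    · obtain ⟨k, hk⟩ := he
      have hk1 : 1 ≤ k := by omega
      have hle := (heven k hk1).2
      have hm2k : m = 2 * k := by omega
      have hOdd : Odd (2*k+1) := ⟨k, by ring⟩
      have := hodd (2*k+1) hOdd
      have h2 : (s (2*k+1) : ℝ) ≤ ((2*k+1:ℕ):ℝ) ^ (D-1) := by
        rw [show ((s (2*k+1) : ℝ)) = ((gsphere G x0 (2*k+1)).ncard : ℝ) from rfl, this]
        exact Int.floor_le _
      calc (s m : ℝ) ≤ (s (2*k+1) : ℝ) := by rw [hm2k]; exact_mod_cast hle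
        _ ≤ ((2*k+1:ℕ):ℝ) ^ (D-1) := h2
        _ = ((m:ℝ)+1) ^ (D-1) := by rw [hm2k]; push_cast; ring_nf
    · have := hodd m ho
      calc (s m : ℝ) = (⌊(m:ℝ) ^ (D-1)⌋ : ℝ) := this
        _ ≤ (m:ℝ) ^ (D-1) := Int.floor_le _
        _ ≤ ((m:ℝ)+1) ^ (D-1) :=
            Real.rpow_le_rpow (by positivity) (by linarith) hD1'
  -- lower bound for spheres
  have hslb : ∀ m : ℕ, 2 ≤ m → ((m:ℝ)-1) ^ (D-1) / 2 ≤ (s m : ℝ) := by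
    intro m hm
    rcases Nat.even_or_odd m with he | ho
    · obtain ⟨k, hk⟩ := he
      have hk1 : 1 ≤ k := by omega
      have hle := (heven k hk1).1
      have hOdd : Odd (2*k-1) := ⟨k-1, by omega⟩
      have hcast : ((2*k-1:ℕ):ℝ) = (m:ℝ) - 1 := by
        have : (2*k-1:ℕ) = m - 1 := by omega
        rw [this, Nat.cast_sub (by omega)]
        norm_num
      have h1 : ((m:ℝ)-1) ^ (D-1) / 2 ≤ (s (2*k-1) : ℝ) := by
        rw [show ((s (2*k-1) : ℝ)) = ((gsphere G x0 (2*k-1)).ncard : ℝ) from rfl,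
          hodd _ hOdd, hcast]
        exact half_le_floor _ (by
          rw [← hcast]
          exact hrpow1 _ (by omega))
      calc ((m:ℝ)-1) ^ (D-1) / 2 ≤ (s (2*k-1) : ℝ) := h1
        _ ≤ (s m : ℝ) := by
            have : m = 2*k := by omega
            rw [this]; exact_mod_cast hle
    · have hm1 : (1:ℝ) ≤ (m:ℝ) := by exact_mod_cast (by omega : 1 ≤ m)
      rw [hodd m ho]
      calc ((m:ℝ)-1) ^ (D-1) / 2 ≤ (m:ℝ) ^ (D-1) / 2 := by
            apply div_le_div_of_nonneg_right _ (by norm_num)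
            exact Real.rpow_le_rpow (by linarith) (by linarith) hD1'
        _ ≤ (⌊(m:ℝ) ^ (D-1)⌋ : ℝ) := half_le_floor _ (hrpow1 m (by omega))
  -- ball upper bound
  have hbub : ∀ n : ℕ, 1 ≤ n → (b n : ℝ) ≤ 2 ^ D * (n:ℝ) ^ D := by
    intro n hn
    have hn1 : (1:ℝ) ≤ (n:ℝ) := by exact_mod_cast hn
    have h1 : (b n : ℝ) = ∑ m ∈ Finset.range (n+1), (s m : ℝ) := by
      rw [(hball n).2]; push_cast; ring
    have h2 : ∑ m ∈ Finset.range (n+1), (s m : ℝ)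
        ≤ ∑ _m ∈ Finset.range (n+1), ((n:ℝ)+1) ^ (D-1) := by
      apply Finset.sum_le_sum
      intro m hm
      refine le_trans (hsub m) (Real.rpow_le_rpow (by positivity) ?_ hD1')
      have hmn : m ≤ n := by have := Finset.mem_range.mp hm; omega
      have : (m:ℝ) ≤ (n:ℝ) := by exact_mod_cast hmn
      linarith
    have h3 : ∑ _m ∈ Finset.range (n+1), ((n:ℝ)+1) ^ (D-1)
        = ((n:ℝ)+1) * ((n:ℝ)+1) ^ (D-1) := by
      rw [Finset.sum_const, Finset.card_range, nsmul_eq_mul]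
      push_cast; ring
    have hx : (0:ℝ) < (n:ℝ)+1 := by positivity
    have h4 : ((n:ℝ)+1) ^ D = ((n:ℝ)+1) * ((n:ℝ)+1) ^ (D-1) := by
      have h := Real.rpow_add hx 1 (D-1)
      rw [Real.rpow_one] at h
      rw [show (1:ℝ)+(D-1) = D by ring] at h
      exact h
    have h5 : ((n:ℝ)+1) ^ D ≤ (2*(n:ℝ)) ^ D :=
      Real.rpow_le_rpow (by positivity) (by linarith) (by linarith)
    have h6 : (2*(n:ℝ)) ^ D = 2^D * (n:ℝ)^D := Real.mul_rpow (by norm_num) (by positivity)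
    calc (b n : ℝ) = ∑ m ∈ Finset.range (n+1), (s m : ℝ) := h1
      _ ≤ ∑ _m ∈ Finset.range (n+1), ((n:ℝ)+1) ^ (D-1) := h2
      _ = ((n:ℝ)+1) * ((n:ℝ)+1) ^ (D-1) := h3
      _ = ((n:ℝ)+1) ^ D := h4.symm
      _ ≤ (2*(n:ℝ)) ^ D := h5
      _ = 2^D * (n:ℝ)^D := h6
  -- ball lower bound
  have hblb : ∀ n : ℕ, 4 ≤ n → ((n:ℝ)/4) ^ D / 2 ≤ (b n : ℝ) := by
    intro n hn
    have hn4 : (4:ℝ) ≤ (n:ℝ) := by exact_mod_cast hn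
    have key : ∀ m ∈ Finset.Icc (n/2+1) n, ((n:ℝ)/4) ^ (D-1) / 2 ≤ (s m : ℝ) := by
      intro m hm
      obtain ⟨hm1, hm2⟩ := Finset.mem_Icc.mp hm
      have hm2' : 2 ≤ m := by omega
      refine le_trans ?_ (hslb m hm2')
      apply div_le_div_of_nonneg_right _ (by norm_num)
      apply Real.rpow_le_rpow (by positivity) ?_ hD1'
      have h1 : n ≤ 2*(n/2)+1 := by omega
      have h2 : ((n:ℝ)) ≤ 2*((n/2:ℕ):ℝ)+1 := by exact_mod_cast h1
      have h3 : ((n/2:ℕ):ℝ) + 1 ≤ (m:ℝ) := by exact_mod_cast hm1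
      linarith
    have hsum1 : ∑ m ∈ Finset.Icc (n/2+1) n, s m ≤ ∑ m ∈ Finset.range (n+1), s m := by
      apply Finset.sum_le_sum_of_subset
      intro m hm
      rw [Finset.mem_range]
      have := (Finset.mem_Icc.mp hm).2; omega
    have hsum2 := Finset.card_nsmul_le_sum (Finset.Icc (n/2+1) n)
      (fun m => (s m : ℝ)) (((n:ℝ)/4) ^ (D-1) / 2) key
    have hcard : (Finset.Icc (n/2+1) n).card = n - n/2 := by
      rw [Nat.card_Icc]; omega
    have hcard' : (n:ℝ)/4 ≤ ((Finset.Icc (n/2+1) n).card : ℝ) := by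
      rw [hcard]
      have h1 : n/2 ≤ n - n/2 := by omega
      have h2 : (n:ℝ) ≤ 2*((n/2:ℕ):ℝ)+1 := by
        exact_mod_cast (by omega : n ≤ 2*(n/2)+1)
      have h3 : ((n/2:ℕ):ℝ) ≤ ((n - n/2:ℕ):ℝ) := by exact_mod_cast h1
      linarith
    have hsum3 : (n:ℝ)/4 * (((n:ℝ)/4) ^ (D-1) / 2)
        ≤ ∑ m ∈ Finset.Icc (n/2+1) n, (s m:ℝ) := by
      refine le_trans (mul_le_mul_of_nonneg_right hcard' (by positivity)) ?_
      simpa [nsmul_eq_mul] using hsum2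
    have heq : (n:ℝ)/4 * (((n:ℝ)/4) ^ (D-1) / 2) = ((n:ℝ)/4) ^ D / 2 := by
      have hx : (0:ℝ) < (n:ℝ)/4 := by positivity
      have h := Real.rpow_add hx 1 (D-1)
      rw [Real.rpow_one, show (1:ℝ)+(D-1) = D by ring] at h
      rw [h]; ring
    have hb : (b n : ℝ) = ∑ m ∈ Finset.range (n+1), (s m:ℝ) := by
      rw [(hball n).2]; push_cast; ring
    have hc : ∑ m ∈ Finset.Icc (n/2+1) n, (s m:ℝ) ≤ (b n:ℝ) := by
      rw [hb]
      exact_mod_cast hsum1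
    linarith [heq ▸ hsum3]
  -- limit
  have hlog : Tendsto (fun n : ℕ => Real.log n) atTop atTop :=
    Real.tendsto_log_atTop.comp tendsto_natCast_atTop_atTop
  set c1 : ℝ := D * Real.log 4 + Real.log 2 with hc1_def
  set c2 : ℝ := D * Real.log 2 with hc2_def
  have hev : ∀ᶠ n : ℕ in atTop,
      D - c1 / Real.log n ≤ Real.log (b n) / Real.log n ∧
      Real.log (b n) / Real.log n ≤ D + c2 / Real.log n := by
    filter_upwards [eventually_ge_atTop 4] with n hn
    have hn1 : (1:ℝ) < (n:ℝ) := by exact_mod_cast (by omega : 1 < n)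
    have hnpos : (0:ℝ) < (n:ℝ) := by linarith
    have hlogn : 0 < Real.log n := Real.log_pos hn1
    have hb1 : 1 ≤ b n := by
      rw [(hball n).2]
      calc 1 = s 0 := hs0.symm
        _ ≤ ∑ m ∈ Finset.range (n+1), s m :=
          Finset.single_le_sum (f := s) (fun i _ => Nat.zero_le _)
            (Finset.mem_range.mpr (by omega))
    have hbpos : (0:ℝ) < (b n : ℝ) := by exact_mod_cast hb1
    have hup : Real.log (b n) ≤ D * Real.log n + c2 := by
      have h := Real.log_le_log hbpos (hbub n (by omega))
      rw [Real.log_mul (by positivity) (by positivity), Real.log_rpow (by norm_num),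
        Real.log_rpow hnpos] at h
      rw [hc2_def]; linarith
    have hlow : D * Real.log n - c1 ≤ Real.log (b n) := by
      have hq : (0:ℝ) < ((n:ℝ)/4) ^ D / 2 := by positivity
      have h := Real.log_le_log hq (hblb n hn)
      rw [Real.log_div (by positivity) (by norm_num), Real.log_rpow (by positivity),
        Real.log_div (by positivity) (by norm_num)] at h
      rw [hc1_def]; linarith
    constructor
    · rw [le_div_iff₀ hlogn]
      have he : (D - c1 / Real.log n) * Real.log n = D * Real.log n - c1 := by
        field_simp
      rw [he]
      linarith
    · rw [div_le_iff₀ hlogn]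
      have he : (D + c2 / Real.log n) * Real.log n = D * Real.log n + c2 := by
        field_simp
      rw [he]
      linarith
  have hl : Tendsto (fun n : ℕ => D - c1 / Real.log n) atTop (𝓝 D) := by
    have h0 : Tendsto (fun n : ℕ => c1 / Real.log n) atTop (𝓝 0) :=
      Tendsto.div_atTop tendsto_const_nhds hlog
    simpa using tendsto_const_nhds.sub h0
  have hu : Tendsto (fun n : ℕ => D + c2 / Real.log n) atTop (𝓝 D) := by
    have h0 : Tendsto (fun n : ℕ => c2 / Real.log n) atTop (𝓝 0) :=
      Tendsto.div_atTop tendsto_const_nhds hlog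
    simpa using tendsto_const_nhds.add h0
  exact tendsto_of_tendsto_of_tendsto_of_le_of_le' hl hu
    (hev.mono fun n h => h.1) (hev.mono fun n h => h.2)
end
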